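/- arXiv:2002.07826 — 2 statements merged into one kernel-verified Lean document; each statement's English description precedes it below -/
import Mathlib

section
/- Let C be a linear [n,k]_q code with generator matrix (A | I_k), where A ∈ F_q^{k×(n−k)}, so that (I_{n−k} | −A^T) is a generator matrix of the dual code C^⊥. Let φ = (DP, α) ∈ Aut(C), so that φ' = (D^{-1}P, α) ∈ Aut(C^⊥), and let B_φ ∈ GL(n−k, F_q) satisfy ((I_{n−k} | −A^T) D^{-1}P)^α = B_φ (I_{n−k} | −A^T). Let a, b ∈ F_q^{n−k} with b^T = (B_φ a^T)^{α^{-1}}. Then the [n+1, k+1]_q codes generated by the matrices ((A; a) | I_{k+1}) and ((A; b) | I_{k+1}), where (A; a) denotes A with the row a appended, are equivalent, via a semimonomial transformation whose underlying coordinate permutation fixes the last coordinate. -/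
open Matrix

variable {F : Type*} [Field F]

/-- A monomial matrix: a product `D * P` of an invertible diagonal matrix and a
permutation matrix. -/
def IsMonomial {n : Type*} [Fintype n] [DecidableEq n] (M : Matrix n n F) : Prop :=
  ∃ (d : n → Fˣ) (P : Equiv.Perm n),
    M = Matrix.diagonal (fun i => (d i : F)) * P.permMatrix F

/-- The semimonomial transformation `(M, α)` acting by `v ↦ (v M)^α`. -/
def semiMap {n : Type*} [Fintype n] (M : Matrix n n F) (α : F ≃+* F) (v : n → F) : n → F :=
  fun j => α (Matrix.vecMul v M j)

/-- The row space of a matrix. -/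
def rowSpan {k n : Type*} (G : Matrix k n F) : Submodule F (n → F) :=
  Submodule.span F (Set.range fun i => G i)

/-- The generator matrix `((A; a) | I_{k+1})`, where `(A; a)` denotes `A` with the row `a`
appended, and the identity columns are indexed by `Fin k ⊕ Unit` (the `Unit` column being
the last coordinate). -/
def extGen {k m : ℕ} (A : Matrix (Fin k) (Fin m) F) (a : Fin m → F) :
    Matrix (Fin k ⊕ Unit) ((Fin m ⊕ Fin k) ⊕ Unit) F :=
  Matrix.fromCols
    (Matrix.fromCols (Matrix.fromRows A (Matrix.of fun _ => a))
      (Matrix.fromRows (1 : Matrix (Fin k) (Fin k) F) (0 : Matrix Unit (Fin k) F)))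
    (Matrix.fromRows (0 : Matrix (Fin k) Unit F) (1 : Matrix Unit Unit F))

/-!
The code generated by `((A; x) | I_{k+1})` is spanned by `C × {0}` and `((x, 0), 1)`, so it only
depends on the coset of `(x, 0)` modulo `C = ker (I | -Aᵀ)`. We apply `φ⁻¹`, extended by the
identity on the last coordinate: since `(DP)⁻¹ = (D⁻¹P)ᵀ`, it is the semimonomial transformation
`((D⁻¹P)ᵀ^α, α⁻¹)`. It maps `C` onto `C`, and by the defining relation of `B_φ` it sends a vector
of syndrome `s` to one of syndrome `(B_φ s)^{α⁻¹}`, so it maps `(a, 0)` into the coset of `(b, 0)`.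
-/

section Extension

variable {ι : Type*}

/-- The span of `C × {0}` and `(x, 1)`. -/
def extendCode (C : Submodule F (ι → F)) (x : ι → F) : Set (ι ⊕ Unit → F) :=
  {v | v ∘ Sum.inl - v (Sum.inr ()) • x ∈ C}

lemma extendCode_eq_of_sub_mem {C : Submodule F (ι → F)} {x y : ι → F} (h : x - y ∈ C) :
    extendCode C x = extendCode C y := by
  ext v
  have : v ∘ Sum.inl - v (Sum.inr ()) • y =
      (v ∘ Sum.inl - v (Sum.inr ()) • x) + v (Sum.inr ()) • (x - y) := by
    rw [smul_sub]; abel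
  rw [extendCode, extendCode, Set.mem_ofPred_eq, Set.mem_ofPred_eq, this,
    C.add_mem_iff_left (C.smul_mem _ h)]

lemma image_extendCode {κ : Type*} {σ : F ≃+* F} (f : (ι → F) →ₛₗ[(σ : F →+* F)] (κ → F))
    (C : Submodule F (ι → F)) (x : ι → F) :
    (fun v => Sum.elim (f (v ∘ Sum.inl)) fun _ => σ (v (Sum.inr ()))) '' extendCode C x =
      extendCode (C.map f) (f x) := by
  ext u
  constructor
  · rintro ⟨v, hv, rfl⟩
    refine ⟨_, hv, ?_⟩
    simp [map_sub, map_smulₛₗ]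
  · rintro ⟨w, hw, hwu⟩
    set t := σ.symm (u (Sum.inr ()))
    refine ⟨Sum.elim (w + t • x) fun _ => t, ?_, ?_⟩
    · simpa [extendCode] using hw
    · ext (i | ⟨⟩)
      · simp [t, map_add, map_smulₛₗ, hwu]
      · simp [t]

end Extension

section SemiMap

variable {n : Type*} [Fintype n]

def semiMapₛₗ (M : Matrix n n F) (α : F ≃+* F) : (n → F) →ₛₗ[(α : F →+* F)] (n → F) where
  toFun := semiMap M α
  map_add' v w := by ext j; simp [semiMap, add_vecMul]
  map_smul' c v := by ext j; simp [semiMap, smul_vecMul]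

lemma semiMap_map_symm (M : Matrix n n F) (α : F ≃+* F) (v : n → F) :
    semiMap (M.map α) α.symm v = (α.symm ∘ v) ᵥ* M := by
  ext j
  rw [semiMap, ← RingEquiv.coe_toRingHom, RingHom.map_vecMul, Matrix.map_map]
  simp [Function.comp_def]

lemma semiMap_map_symm_semiMap [DecidableEq n] {M N : Matrix n n F} (h : M * N = 1)
    (α : F ≃+* F) (v : n → F) : semiMap (N.map α) α.symm (semiMap M α v) = v := by
  rw [semiMap_map_symm, show α.symm ∘ semiMap M α v = v ᵥ* M from funext fun j =>
    α.symm_apply_apply _, vecMul_vecMul, h, vecMul_one]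

lemma image_semiMap_map_symm [DecidableEq n] {M N : Matrix n n F} (h : M * N = 1)
    {α : F ≃+* F} {C : Set (n → F)} (hC : semiMap M α '' C = C) :
    semiMap (N.map α) α.symm '' C = C := by
  conv_lhs => rw [← hC]
  simp [Set.image_image, semiMap_map_symm_semiMap h]

lemma semiMap_fromBlocks_one (M : Matrix n n F) (β : F ≃+* F) :
    semiMap (fromBlocks M 0 0 (of fun _ _ => 1 : Matrix Unit Unit F)) β =
      fun v => Sum.elim (semiMap M β (v ∘ Sum.inl)) fun _ => β (v (Sum.inr ())) := by
  ext v (j | ⟨⟩) <;> simp [semiMap, vecMul, dotProduct]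

end SemiMap

section Monomial

variable {n : Type*} [Fintype n] [DecidableEq n]

lemma permMatrix_mul_diagonal (P : Equiv.Perm n) (e : n → F) :
    P.permMatrix F * diagonal e = diagonal (e ∘ P) * P.permMatrix F := by
  ext i j
  simp only [mul_diagonal, diagonal_mul, PEquiv.toMatrix_apply, Equiv.toPEquiv_apply,
    Option.mem_def, Option.some.injEq, Function.comp_apply]
  split_ifs with h <;> simp [h]

lemma IsMonomial.transpose {M : Matrix n n F} (h : IsMonomial M) : IsMonomial Mᵀ := by
  obtain ⟨d, P, rfl⟩ := h
  refine ⟨fun i => d (P⁻¹ i), P⁻¹, ?_⟩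
  rw [transpose_mul, transpose_permMatrix, diagonal_transpose, permMatrix_mul_diagonal]
  rfl

lemma IsMonomial.map {M : Matrix n n F} (h : IsMonomial M) (α : F ≃+* F) :
    IsMonomial (M.map α) := by
  obtain ⟨d, P, rfl⟩ := h
  refine ⟨fun i => Units.map α (d i), P, ?_⟩
  ext i j
  simp only [Matrix.map_apply, diagonal_mul, PEquiv.toMatrix_apply, Equiv.toPEquiv_apply,
    Option.mem_def, Option.some.injEq, Units.coe_map]
  split_ifs <;> simp

lemma diagonal_mul_permMatrix_mul_transpose_inv (d : n → Fˣ) (P : Equiv.Perm n) :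
    diagonal (fun i => (d i : F)) * P.permMatrix F *
      (diagonal (fun i => (((d i)⁻¹ : Fˣ) : F)) * P.permMatrix F)ᵀ = 1 := by
  rw [transpose_mul, transpose_permMatrix, diagonal_transpose, mul_assoc,
    ← mul_assoc (P.permMatrix F), ← permMatrix_mul, inv_mul_cancel, permMatrix_one, one_mul,
    diagonal_mul_diagonal]
  simp

end Monomial

section RowSpan

variable {κ μ : Type*} [Fintype κ]

lemma mem_rowSpan_iff {G : Matrix κ μ F} {v : μ → F} : v ∈ rowSpan G ↔ ∃ y, y ᵥ* G = v := by
  rw [rowSpan, show (Set.range fun i => G i) = Set.range G.row from rfl, ← range_vecMulLinear]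
  rfl

lemma fromCols_one_neg_transpose_mulVec_sumElim_zero [Fintype μ] [DecidableEq μ]
    (A : Matrix κ μ F) (x : μ → F) :
    fromCols (1 : Matrix μ μ F) (-Aᵀ) *ᵥ Sum.elim x 0 = x := by
  simp

lemma mem_rowSpan_of_mulVec_eq_zero [Fintype μ] [DecidableEq κ] [DecidableEq μ]
    {A : Matrix κ μ F} {v : μ ⊕ κ → F} (hv : fromCols (1 : Matrix μ μ F) (-Aᵀ) *ᵥ v = 0) :
    v ∈ rowSpan (fromCols A (1 : Matrix κ κ F)) := by
  rw [mem_rowSpan_iff]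
  refine ⟨v ∘ Sum.inr, ?_⟩
  rw [fromCols_mulVec, one_mulVec, neg_mulVec, ← sub_eq_add_neg, sub_eq_zero,
    mulVec_transpose] at hv
  rw [vecMul_fromCols, vecMul_one, ← hv, Sum.elim_comp_inl_inr]

end RowSpan

lemma vecMul_extGen {k m : ℕ} (A : Matrix (Fin k) (Fin m) F) (x : Fin m → F)
    (y : Fin k ⊕ Unit → F) :
    y ᵥ* extGen A x = Sum.elim (y ∘ Sum.inl ᵥ* fromCols A 1 + y (Sum.inr ()) • Sum.elim x 0)
      fun _ => y (Sum.inr ()) := by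
  ext ((j | j) | ⟨⟩) <;> simp [extGen, vecMul, dotProduct, one_apply]

lemma coe_rowSpan_extGen {k m : ℕ} (A : Matrix (Fin k) (Fin m) F) (x : Fin m → F) :
    (rowSpan (extGen A x) : Set _) =
      extendCode (rowSpan (fromCols A (1 : Matrix (Fin k) (Fin k) F))) (Sum.elim x 0) := by
  ext v
  simp only [SetLike.mem_coe, mem_rowSpan_iff, extendCode, Set.mem_ofPred_eq]
  constructor
  · rintro ⟨y, rfl⟩
    exact ⟨y ∘ Sum.inl, by simp [vecMul_extGen]⟩
  · rintro ⟨z, hz⟩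
    refine ⟨Sum.elim z fun _ => v (Sum.inr ()), ?_⟩
    ext (j | ⟨⟩) <;> simp [vecMul_extGen, hz]

theorem stmt6_general {k m : ℕ}
    (A : Matrix (Fin k) (Fin m) F)
    (C : Submodule F ((Fin m ⊕ Fin k) → F))
    (hC : rowSpan (Matrix.fromCols A (1 : Matrix (Fin k) (Fin k) F)) = C)
    (d : (Fin m ⊕ Fin k) → Fˣ) (P : Equiv.Perm (Fin m ⊕ Fin k)) (α : F ≃+* F)
    (hAut : semiMap (Matrix.diagonal (fun i => (d i : F)) * P.permMatrix F) α ''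
        (C : Set ((Fin m ⊕ Fin k) → F)) = (C : Set ((Fin m ⊕ Fin k) → F)))
    (B : Matrix (Fin m) (Fin m) F)
    (hBG : ((Matrix.fromCols (1 : Matrix (Fin m) (Fin m) F) (-Aᵀ)) *
          (Matrix.diagonal (fun i => (((d i)⁻¹ : Fˣ) : F)) * P.permMatrix F)).map ⇑α =
        B * Matrix.fromCols (1 : Matrix (Fin m) (Fin m) F) (-Aᵀ))
    (a b : Fin m → F)
    (hb : b = fun i => α.symm ((B *ᵥ a) i)) :
    ∃ (M1 : Matrix (Fin m ⊕ Fin k) (Fin m ⊕ Fin k) F) (lam : Fˣ) (β : F ≃+* F),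
      IsMonomial M1 ∧
      semiMap (Matrix.fromBlocks M1 0 0 (Matrix.of fun _ _ => (lam : F))) β ''
          (rowSpan (extGen A a) : Set (((Fin m ⊕ Fin k) ⊕ Unit) → F)) =
        (rowSpan (extGen A b) : Set (((Fin m ⊕ Fin k) ⊕ Unit) → F)) := by
  set H := fromCols (1 : Matrix (Fin m) (Fin m) F) (-Aᵀ)
  set N := diagonal (fun i => (((d i)⁻¹ : Fˣ) : F)) * P.permMatrix F
  let f := semiMapₛₗ (Nᵀ.map α) α.symm
  have hf : ∀ v, f v = (α.symm ∘ v) ᵥ* Nᵀ := semiMap_map_symm Nᵀ α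
  have hfC : C.map f = C := SetLike.coe_injective <| by
    rw [Submodule.map_coe]
    exact image_semiMap_map_symm (diagonal_mul_permMatrix_mul_transpose_inv d P) hAut
  have hHN : H * N = (B * H).map α.symm := by
    rw [← hBG, Matrix.map_map]
    simp [Function.comp_def]
  have hsyndrome : H *ᵥ f (Sum.elim a 0) = H *ᵥ Sum.elim b 0 := by
    rw [hf, vecMul_transpose, mulVec_mulVec, hHN,
      fromCols_one_neg_transpose_mulVec_sumElim_zero, hb]
    ext i
    rw [← RingEquiv.coe_toRingHom, ← RingHom.map_mulVec, ← mulVec_mulVec,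
      fromCols_one_neg_transpose_mulVec_sumElim_zero]
  have hsub : f (Sum.elim a 0) - Sum.elim b 0 ∈ C :=
    hC ▸ mem_rowSpan_of_mulVec_eq_zero (by rw [mulVec_sub, hsyndrome, sub_self])
  refine ⟨Nᵀ.map α, 1, α.symm, (IsMonomial.transpose ⟨_, P, rfl⟩).map α, ?_⟩
  rw [Units.val_one, semiMap_fromBlocks_one, coe_rowSpan_extGen, coe_rowSpan_extGen, hC]
  have h := image_extendCode f C (Sum.elim a 0)
  rwa [hfC, extendCode_eq_of_sub_mem hsub] at h

/-- Let `C` be the `[n,k]_q` code generated by `(A | I_k)`, so that `(I_{n-k} | -Aᵀ)`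
generates `C^⊥`.  Let `φ = (DP, α) ∈ Aut(C)`, so `φ' = (D⁻¹P, α) ∈ Aut(C^⊥)`, let
`B_φ ∈ GL(n-k, F_q)` satisfy `((I_{n-k} | -Aᵀ) D⁻¹P)^α = B_φ (I_{n-k} | -Aᵀ)`, and let
`bᵀ = (B_φ aᵀ)^{α⁻¹}`.  Then the `[n+1,k+1]_q` codes generated by `((A; a) | I_{k+1})`
and `((A; b) | I_{k+1})` are equivalent via a semimonomial transformation whose underlying
coordinate permutation fixes the last coordinate. -/
theorem stmt6 [Fintype F] {k m : ℕ}
    (A : Matrix (Fin k) (Fin m) F)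
    (C : Submodule F ((Fin m ⊕ Fin k) → F))
    (hC : rowSpan (Matrix.fromCols A (1 : Matrix (Fin k) (Fin k) F)) = C)
    (d : (Fin m ⊕ Fin k) → Fˣ) (P : Equiv.Perm (Fin m ⊕ Fin k)) (α : F ≃+* F)
    (hAut : semiMap (Matrix.diagonal (fun i => (d i : F)) * P.permMatrix F) α ''
        (C : Set ((Fin m ⊕ Fin k) → F)) = (C : Set ((Fin m ⊕ Fin k) → F)))
    (B : Matrix (Fin m) (Fin m) F) (hB : IsUnit B)
    (hBG : ((Matrix.fromCols (1 : Matrix (Fin m) (Fin m) F) (-Aᵀ)) *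
          (Matrix.diagonal (fun i => (((d i)⁻¹ : Fˣ) : F)) * P.permMatrix F)).map ⇑α =
        B * Matrix.fromCols (1 : Matrix (Fin m) (Fin m) F) (-Aᵀ))
    (a b : Fin m → F)
    (hb : b = fun i => α.symm ((B *ᵥ a) i)) :
    ∃ (M1 : Matrix (Fin m ⊕ Fin k) (Fin m ⊕ Fin k) F) (lam : Fˣ) (β : F ≃+* F),
      IsMonomial M1 ∧
      semiMap (Matrix.fromBlocks M1 0 0 (Matrix.of fun _ _ => (lam : F))) β ''
          (rowSpan (extGen A a) : Set (((Fin m ⊕ Fin k) ⊕ Unit) → F)) =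
        (rowSpan (extGen A b) : Set (((Fin m ⊕ Fin k) ⊕ Unit) → F)) :=
  stmt6_general A C hC d P α hAut B hBG a b hb
end

section
/- Let C be a linear [n,k]_q code of effective length n with generator matrix G, all of whose nonzero codewords have Hamming weight in W ⊆ ℕ_{≥1}, and let M̃ be the set of points of PG(k−1, F_q) spanned by the columns of G. For each P ∈ M̃ with column multiplicity m(P), there exists a linear code C_P of effective length n−m(P) and dimension k−1, all of whose nonzero codewords have weight in W, such that C is equivalent to the code generated by a block matrix [[Ĝ_P, 0],[a, 1⋯1]], where Ĝ_P is a generator matrix of C_P, a ∈ F_q^{n−m(P)}, and the last block consists of m(P) columns. -/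
open Matrix

variable {F : Type*} [Field F]

/-- The multiplicity of the column `j0` of `G`: the number of columns of `G` whose span
equals the span of column `j0`. -/
noncomputable def colMult {m n : Type*} [Fintype n] (G : Matrix m n F) (j0 : n) : ℕ :=
  Nat.card {j : n // Submodule.span F {fun i => G i j} =
    Submodule.span F {fun i => G i j0}}

/-- A semimonomial transformation (coordinate relabeling `e`, nonzero scalars `d`, field
automorphism `α`). -/
def monMap {n1 n2 : Type*} (e : n1 ≃ n2) (d : n2 → Fˣ) (α : F ≃+* F) (v : n1 → F) :
    n2 → F :=
  fun j => α ((d j : F) * v (e.symm j))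

/-- Two linear codes are equivalent if some semimonomial transformation maps one onto
the other. -/
def CodeEquivR {n1 n2 : Type*} (C1 : Submodule F (n1 → F)) (C2 : Submodule F (n2 → F)) :
    Prop :=
  ∃ (e : n1 ≃ n2) (d : n2 → Fˣ) (α : F ≃+* F),
    monMap e d α '' (C1 : Set (n1 → F)) = (C2 : Set (n2 → F))

/-- The block matrix `[[G, 0], [a, 1⋯1]]` with `r` columns in the last block. -/
def extBlock {k m r : ℕ} (Gres : Matrix (Fin k) (Fin m) F) (a : Fin m → F) :
    Matrix (Fin k ⊕ Unit) (Fin m ⊕ Fin r) F :=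
  Matrix.fromBlocks Gres 0 (Matrix.of fun _ j => a j) (Matrix.of fun _ _ => (1 : F))

/-!
The columns of `G` spanning the point `P = ⟨g_{j₀}⟩` are exactly the coordinates `j` on which
`c j = u_j * c j₀` for all `c ∈ C`, with a fixed unit `u_j`. Moving these `m` coordinates to the
end and dividing them by `u_j` gives an equivalent code `D` that is constant on the last block.
If `s ∈ D` takes the value `1` there, every `c ∈ D` splits as `(v, 0) + c(j₀) • s` with `v` in the
shortened code `C_P = {v | (v, 0) ∈ D}`; this yields the block generator matrix and
`dim C_P = k - 1`, and the weights of `C_P` are weights of `C`. A coordinate on which `C_P`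
vanishes identically would be proportional to `j₀` in `D`, so `C_P` has full effective length.
-/

section Hamming

variable [DecidableEq F] {ι ι' : Type*} [Fintype ι] [Fintype ι']

theorem hammingNorm_comp_equiv (e : ι' ≃ ι) (v : ι → F) :
    hammingNorm (v ∘ e) = hammingNorm v :=
  Finset.card_equiv e (by simp)

theorem hammingNorm_monMap (e : ι ≃ ι') (d : ι' → Fˣ) (α : F ≃+* F) (v : ι → F) :
    hammingNorm (monMap e d α v) = hammingNorm v := by
  rw [← hammingNorm_comp_equiv e.symm v]
  exact hammingNorm_comp (fun j x => α (d j * x))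
    (fun j => α.injective.comp (mul_right_injective₀ (d j).ne_zero)) (by simp)

theorem hammingNorm_sum_elim_zero (v : ι → F) :
    hammingNorm (Sum.elim v (0 : ι' → F)) = hammingNorm v := by
  refine (Finset.card_bij (fun j _ => Sum.inl j) ?_ ?_ ?_).symm
  · simp
  · simp
  · rintro (a | b) h <;> simp_all

def HasWeightsIn (C : Submodule F (ι → F)) (W : Set ℕ) : Prop :=
  ∀ c ∈ C, c ≠ 0 → hammingNorm c ∈ W

theorem HasWeightsIn.map {C : Submodule F (ι → F)} {W : Set ℕ} (h : HasWeightsIn C W)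
    (L : (ι → F) →ₗ[F] (ι' → F)) (hL : ∀ v, hammingNorm (L v) = hammingNorm v) :
    HasWeightsIn (C.map L) W := by
  rintro _ ⟨c, hc, rfl⟩ hne
  rw [hL]
  exact h c hc (by rintro rfl; simp at hne)

end Hamming

section Monomial

variable {ι ι' : Type*}

def monLinearEquiv (e : ι ≃ ι') (d : ι' → Fˣ) : (ι → F) ≃ₗ[F] (ι' → F) :=
  (LinearEquiv.funCongrLeft F F e.symm).trans
    (LinearEquiv.piCongrRight fun j => LinearEquiv.smulOfUnit (d j))

theorem monLinearEquiv_apply (e : ι ≃ ι') (d : ι' → Fˣ) (v : ι → F) :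
    monLinearEquiv e d v = monMap e d (RingEquiv.refl F) v :=
  rfl

theorem codeEquivR_map_monLinearEquiv (C : Submodule F (ι → F)) (e : ι ≃ ι') (d : ι' → Fˣ) :
    CodeEquivR C (C.map (monLinearEquiv e d).toLinearMap) :=
  ⟨e, d, RingEquiv.refl F, by rw [Submodule.map_coe]; rfl⟩

end Monomial

section Proportional

variable {ι κ : Type*}

def CoordProportional (C : Submodule F (ι → F)) (j j₀ : ι) : Prop :=
  ∃ u : Fˣ, ∀ c ∈ C, c j = u * c j₀

theorem coordProportional_refl (C : Submodule F (ι → F)) (j : ι) : CoordProportional C j j :=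
  ⟨1, by simp⟩

theorem rowSpan_le_iff {G : Matrix κ ι F} {p : Submodule F (ι → F)} :
    rowSpan G ≤ p ↔ ∀ i, G i ∈ p := by
  rw [rowSpan, Submodule.span_le, Set.range_subset_iff]
  rfl

theorem span_col_eq_span_col_iff (G : Matrix κ ι F) (j j₀ : ι) :
    Submodule.span F {fun i => G i j} = Submodule.span F {fun i => G i j₀} ↔
      CoordProportional (rowSpan G) j j₀ := by
  rw [eq_comm, Submodule.span_singleton_eq_span_singleton]
  constructor
  · rintro ⟨u, hu⟩
    refine ⟨u, fun c hc => ?_⟩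
    have hker : rowSpan G ≤ LinearMap.ker
        (LinearMap.proj j - (u : F) • LinearMap.proj j₀ : (ι → F) →ₗ[F] F) := by
      rw [rowSpan_le_iff]
      intro i
      simp [← congrFun hu i, Units.smul_def]
    simpa [sub_eq_zero] using hker hc
  · rintro ⟨u, hu⟩
    exact ⟨u, funext fun i => by
      simp [Units.smul_def, hu (G i) (Submodule.subset_span ⟨i, rfl⟩)]⟩

theorem colMult_eq_card_coordProportional [Fintype ι] (G : Matrix κ ι F) (j₀ : ι) :
    colMult G j₀ = Nat.card {j // CoordProportional (rowSpan G) j j₀} := by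
  simp_rw [colMult, span_col_eq_span_col_iff]

end Proportional

theorem exists_sumEquiv_fin {ι : Type*} [Fintype ι] (p : ι → Prop) [DecidablePred p] {n m : ℕ}
    (hn : Fintype.card ι = n) (hm : Fintype.card {i // p i} = m) :
    ∃ τ : Fin (n - m) ⊕ Fin m ≃ ι, (∀ a, ¬ p (τ (.inl a))) ∧ ∀ b, p (τ (.inr b)) := by
  have hcompl : Fintype.card {i // ¬ p i} = n - m := by
    rw [Fintype.card_subtype_compl, hn, hm]
  let e₁ := (Fintype.equivFinOfCardEq hcompl).symm
  let e₂ := (Fintype.equivFinOfCardEq hm).symm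
  exact ⟨(Equiv.sumCongr e₁ e₂).trans ((Equiv.sumComm _ _).trans (Equiv.sumCompl p)),
    fun a => (e₁ a).2, fun b => (e₂ b).2⟩

section Shortening

def extendByZero (α β : Type*) : (α → F) →ₗ[F] (α ⊕ β → F) where
  toFun v := Sum.elim v 0
  map_add' v w := by ext (a | b) <;> simp
  map_smul' x v := by ext (a | b) <;> simp

variable {α β : Type*}

@[simp]
theorem extendByZero_apply (v : α → F) : extendByZero α β v = Sum.elim v 0 :=
  rfl

def shortening (D : Submodule F (α ⊕ β → F)) : Submodule F (α → F) :=
  D.comap (extendByZero α β)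

theorem HasWeightsIn.shortening [Fintype α] [Fintype β] [DecidableEq F]
    {D : Submodule F (α ⊕ β → F)} {W : Set ℕ} (h : HasWeightsIn D W) :
    HasWeightsIn (shortening D) W := by
  intro v hv hne
  rw [← hammingNorm_sum_elim_zero (ι' := β) v]
  exact h _ hv (by simpa [funext_iff, Sum.forall] using hne)

variable {D : Submodule F (α ⊕ β → F)} {b₀ : β}

theorem eq_extendByZero_of_mem (hD : ∀ c ∈ D, ∀ b, c (.inr b) = c (.inr b₀))
    {c : α ⊕ β → F} (hc : c ∈ D) (h₀ : c (.inr b₀) = 0) :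
    c = extendByZero α β (c ∘ Sum.inl) := by
  funext x
  rcases x with a | b
  · rfl
  · simp [hD c hc b, h₀]

theorem sub_smul_comp_inl_mem_shortening (hD : ∀ c ∈ D, ∀ b, c (.inr b) = c (.inr b₀))
    {s c : α ⊕ β → F} (hs : s ∈ D) (hs₁ : s (.inr b₀) = 1) (hc : c ∈ D) :
    (c - c (.inr b₀) • s) ∘ Sum.inl ∈ shortening D := by
  have hmem : c - c (.inr b₀) • s ∈ D := D.sub_mem hc (D.smul_mem _ hs)
  rw [shortening, Submodule.mem_comap,
    ← eq_extendByZero_of_mem hD hmem (by simp [hs₁])]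
  exact hmem

theorem finrank_shortening_add_one [Finite α] [Finite β]
    (hD : ∀ c ∈ D, ∀ b, c (.inr b) = c (.inr b₀)) {s : α ⊕ β → F} (hs : s ∈ D)
    (hs₁ : s (.inr b₀) = 1) :
    Module.finrank F (shortening D) + 1 = Module.finrank F D := by
  let t : D →ₗ[F] F := (LinearMap.proj (.inr b₀)).domRestrict D
  let g : LinearMap.ker t →ₗ[F] (α → F) :=
    LinearMap.funLeft F F Sum.inl ∘ₗ D.subtype ∘ₗ (LinearMap.ker t).subtype
  have hg_inj : Function.Injective g := by
    rintro ⟨⟨c, hc⟩, hc₀⟩ ⟨⟨c', hc'⟩, hc'₀⟩ h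
    have h' : c ∘ Sum.inl = c' ∘ Sum.inl := h
    simp only [Subtype.mk.injEq]
    rw [eq_extendByZero_of_mem hD hc hc₀, eq_extendByZero_of_mem hD hc' hc'₀, h']
  have hg_range : LinearMap.range g = shortening D := by
    ext v
    constructor
    · rintro ⟨⟨⟨c, hc⟩, hc₀⟩, rfl⟩
      show extendByZero α β (c ∘ Sum.inl) ∈ D
      rwa [← eq_extendByZero_of_mem hD hc hc₀]
    · intro hv
      exact ⟨⟨⟨_, hv⟩, by simp [t]⟩, rfl⟩
  have ht_range : LinearMap.range t = ⊤ :=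
    LinearMap.range_eq_top.mpr fun x => ⟨x • ⟨s, hs⟩, by simp [t, hs₁]⟩
  have := t.finrank_range_add_finrank_ker
  rw [ht_range, finrank_top, Module.finrank_self] at this
  rw [← hg_range, LinearMap.finrank_range_of_inj hg_inj]
  omega

theorem exists_mem_apply_eq_one {ι : Type*} {C : Submodule F (ι → F)} {i : ι}
    (h : ∃ c ∈ C, c i ≠ 0) : ∃ s ∈ C, s i = 1 := by
  obtain ⟨c, hc, hci⟩ := h
  exact ⟨(c i)⁻¹ • c, C.smul_mem _ hc, by simp [hci]⟩

theorem exists_apply_ne_zero_of_mem_shortening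
    (hD : ∀ c ∈ D, ∀ b, c (.inr b) = c (.inr b₀)) (heff : ∀ i, ∃ c ∈ D, c i ≠ 0)
    (hprop : ∀ a, ¬ CoordProportional D (.inl a) (.inr b₀)) (a : α) :
    ∃ v ∈ shortening D, v a ≠ 0 := by
  obtain ⟨s, hs, hs₁⟩ := exists_mem_apply_eq_one (heff (.inr b₀))
  by_contra! hzero
  have hcoord : ∀ c ∈ D, c (.inl a) = s (.inl a) * c (.inr b₀) := fun c hc => by
    have := hzero _ (sub_smul_comp_inl_mem_shortening hD hs hs₁ hc)
    simpa [sub_eq_zero, mul_comm] using this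
  have hsa : s (.inl a) ≠ 0 := by
    obtain ⟨c, hc, hca⟩ := heff (.inl a)
    exact fun h => hca (by simp [hcoord c hc, h])
  exact hprop a ⟨Units.mk0 _ hsa, hcoord⟩

theorem rowSpan_extBlock_eq {p r k : ℕ} {D : Submodule F (Fin p ⊕ Fin r → F)} {b₀ : Fin r}
    (hD : ∀ c ∈ D, ∀ b, c (.inr b) = c (.inr b₀)) {s : Fin p ⊕ Fin r → F} (hs : s ∈ D)
    (hs₁ : s (.inr b₀) = 1) {GP : Matrix (Fin k) (Fin p) F} (hGP : rowSpan GP = shortening D) :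
    rowSpan (extBlock GP (s ∘ Sum.inl)) = D := by
  set E := extBlock (r := r) GP (s ∘ Sum.inl)
  have hrow_inl : ∀ i, E (.inl i) = extendByZero _ (Fin r) (GP i) :=
    fun i => by funext x; rcases x with a | b <;> simp [E, extBlock]
  have hrow_inr : ∀ u, E (.inr u) = s := fun u => by
    funext x
    rcases x with a | b
    · simp [E, extBlock]
    · simp [E, extBlock, hD s hs b, hs₁]
  apply le_antisymm
  · rw [rowSpan_le_iff]
    rintro (i | u)
    · rw [hrow_inl]
      exact (hGP ▸ Submodule.subset_span ⟨i, rfl⟩ : GP i ∈ shortening D)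
    · rw [hrow_inr]
      exact hs
  · intro c hc
    have hmap : (rowSpan GP).map (extendByZero _ (Fin r)) ≤ rowSpan E := by
      rw [rowSpan, Submodule.map_span, Submodule.span_le]
      rintro _ ⟨_, ⟨i, rfl⟩, rfl⟩
      exact Submodule.subset_span ⟨.inl i, hrow_inl i⟩
    have hdecomp : c = extendByZero _ _ ((c - c (.inr b₀) • s) ∘ Sum.inl) + c (.inr b₀) • s := by
      rw [← eq_extendByZero_of_mem hD (D.sub_mem hc (D.smul_mem _ hs)) (by simp [hs₁]),
        sub_add_cancel]
    rw [hdecomp]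
    refine Submodule.add_mem _ (hmap ⟨_, ?_, rfl⟩) (Submodule.smul_mem _ _ ?_)
    · rw [hGP]
      exact sub_smul_comp_inl_mem_shortening hD hs hs₁ hc
    · exact Submodule.subset_span ⟨.inr (), hrow_inr ()⟩

end Shortening

theorem exists_codeEquivR_constant_on_block [DecidableEq F] {n m : ℕ}
    {C : Submodule F (Fin n → F)} (heff : ∀ j, ∃ c ∈ C, c j ≠ 0) {j₀ : Fin n}
    (hm : Nat.card {j // CoordProportional C j j₀} = m) :
    ∃ (L : (Fin n → F) ≃ₗ[F] (Fin (n - m) ⊕ Fin m → F)) (b₀ : Fin m),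
      CodeEquivR C (C.map L.toLinearMap) ∧ (∀ v, hammingNorm (L v) = hammingNorm v) ∧
      (∀ c ∈ C.map L.toLinearMap, ∀ b, c (.inr b) = c (.inr b₀)) ∧
      (∀ i, ∃ c ∈ C.map L.toLinearMap, c i ≠ 0) ∧
      ∀ a, ¬ CoordProportional (C.map L.toLinearMap) (.inl a) (.inr b₀) := by
  classical
  obtain ⟨τ, hτl, hτr⟩ := exists_sumEquiv_fin (m := m)
    (fun j => CoordProportional C j j₀) (Fintype.card_fin n) (by rwa [← Nat.card_eq_fintype_card])
  choose u hu using hτr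
  let L := monLinearEquiv τ.symm (Sum.elim 1 fun b => (u b)⁻¹)
  have hL_inl : ∀ v a, L v (.inl a) = v (τ (.inl a)) := fun v a => by
    simp [L, monLinearEquiv_apply, monMap]
  have hL_inr : ∀ c ∈ C, ∀ b, L c (.inr b) = c j₀ := fun c hc b => by
    simp [L, monLinearEquiv_apply, monMap, hu b c hc]
  obtain ⟨b₀, -⟩ : ∃ b₀, τ (.inr b₀) = j₀ := by
    rcases h : τ.symm j₀ with a | b
    · exact absurd (coordProportional_refl C j₀) (by simpa [← h] using hτl a)
    · exact ⟨b, by rw [← h, Equiv.apply_symm_apply]⟩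
  refine ⟨L, b₀, codeEquivR_map_monLinearEquiv C _ _, fun v => by
    rw [monLinearEquiv_apply, hammingNorm_monMap],
    ?_, ?_, ?_⟩
  · rintro _ ⟨c, hc, rfl⟩ b
    simp only [LinearEquiv.coe_coe, hL_inr c hc]
  · rintro (a | b)
    · obtain ⟨c, hc, hca⟩ := heff (τ (.inl a))
      exact ⟨L c, Submodule.mem_map_of_mem hc, by simpa [hL_inl] using hca⟩
    · obtain ⟨c, hc, hc₀⟩ := heff j₀
      exact ⟨L c, Submodule.mem_map_of_mem hc, by simpa [hL_inr c hc] using hc₀⟩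
  · rintro a ⟨w, hw⟩
    refine hτl a ⟨w, fun c hc => ?_⟩
    simpa [hL_inl, hL_inr c hc] using hw (L c) (Submodule.mem_map_of_mem hc)

theorem rowSpan_basis {ι n : Type*} {p : Submodule F (n → F)} (b : Module.Basis ι F p) :
    rowSpan (fun i => (b i : n → F)) = p := by
  show Submodule.span F (Set.range (p.subtype ∘ b)) = p
  rw [Set.range_comp, ← Submodule.map_span, b.span_eq, Submodule.map_top, Submodule.range_subtype]

theorem stmt10_general [DecidableEq F] {n k : ℕ} (W : Set ℕ)
    (C : Submodule F (Fin n → F)) (hdim : Module.finrank F C = k)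
    (heff : ∀ j, ∃ c ∈ C, c j ≠ 0)
    (hw : ∀ c ∈ C, c ≠ 0 → hammingNorm c ∈ W)
    (G : Matrix (Fin k) (Fin n) F) (hG : rowSpan G = C)
    (j0 : Fin n) (m : ℕ) (hm : colMult G j0 = m) :
    ∃ (CP : Submodule F (Fin (n - m) → F))
      (GP : Matrix (Fin (k - 1)) (Fin (n - m)) F) (aa : Fin (n - m) → F),
      rowSpan GP = CP ∧
      Module.finrank F CP = k - 1 ∧
      (∀ j, ∃ c ∈ CP, c j ≠ 0) ∧
      (∀ c ∈ CP, c ≠ 0 → hammingNorm c ∈ W) ∧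
      CodeEquivR C (rowSpan (extBlock (r := m) GP aa)) := by
  rw [colMult_eq_card_coordProportional, hG] at hm
  obtain ⟨L, b₀, hequiv, hnorm, hD, heffD, hpropD⟩ := exists_codeEquivR_constant_on_block heff hm
  obtain ⟨s, hs, hs₁⟩ := exists_mem_apply_eq_one (heffD (.inr b₀))
  have hdimD : Module.finrank F (shortening (C.map L.toLinearMap)) = k - 1 := by
    have := finrank_shortening_add_one hD hs hs₁
    rw [LinearEquiv.finrank_map_eq, hdim] at this
    omega
  let b := Module.finBasisOfFinrankEq F _ hdimD
  refine ⟨_, fun i => b i, s ∘ Sum.inl, rowSpan_basis b, hdimD,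
    exists_apply_ne_zero_of_mem_shortening hD heffD hpropD,
    ((show HasWeightsIn C W from hw).map _ hnorm).shortening, ?_⟩
  rwa [rowSpan_extBlock_eq hD hs hs₁ (rowSpan_basis b)]

/-- Lemma 8.  Let `C` be an `[n,k,W]_q` code with generator matrix `G`.  For each point
`P` spanned by a column of `G` (say column `j0`, with multiplicity `m`) there exists an
`[n - m, k - 1, W]_q` code `C_P` such that `C` is equivalent to the code generated by
the block matrix `[[Ĝ_P, 0], [a, 1⋯1]]`, where `Ĝ_P` generates `C_P` and the last block
has `m` columns. -/
theorem stmt10 [Fintype F] [DecidableEq F] {n k : ℕ} (W : Set ℕ)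
    (hW : ∀ w ∈ W, 1 ≤ w)
    (C : Submodule F (Fin n → F)) (hdim : Module.finrank F C = k)
    (heff : ∀ j, ∃ c ∈ C, c j ≠ 0)
    (hw : ∀ c ∈ C, c ≠ 0 → hammingNorm c ∈ W)
    (G : Matrix (Fin k) (Fin n) F) (hG : rowSpan G = C)
    (j0 : Fin n) (m : ℕ) (hm : colMult G j0 = m) :
    ∃ (CP : Submodule F (Fin (n - m) → F))
      (GP : Matrix (Fin (k - 1)) (Fin (n - m)) F) (aa : Fin (n - m) → F),
      rowSpan GP = CP ∧
      Module.finrank F CP = k - 1 ∧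
      (∀ j, ∃ c ∈ CP, c j ≠ 0) ∧
      (∀ c ∈ CP, c ≠ 0 → hammingNorm c ∈ W) ∧
      CodeEquivR C (rowSpan (extBlock (r := m) GP aa)) :=
  stmt10_general W C hdim heff hw G hG j0 m hm
end
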